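/- Let λ, μ > 0 with ρ = λ/μ < 1, and let i, j ≥ 0 be integers. Then p_{ij}(0) equals 1 if i = j and equals 0 if i ≠ j; that is, (2/π)·ρ^{(j−i)/2}·∫₀^π (1/γ(y))·a_i(y)·a_j(y) dy + (1−ρ)·ρ^j equals 1 when i = j and 0 when i ≠ j. -/

import Mathlib

/-!
The product-to-sum formulas give, with `s = i + j`,
`2 a_i a_j = γ cos((i - j) y) - (cos(s y) - 2√ρ cos((s + 1) y) + ρ cos((s + 2) y))`,
so in the first term `γ` cancels and its integral over `[0, π]` is `π δ_{ij}`. The moments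
`∫₀^π cos(c y) / γ(y) dy` satisfy a three-term recurrence (from `2√ρ cos y = 1 + ρ - γ`) which
reduces them at `c = n` to `π ρ^{n/2} / (1 - ρ)`, the case `n = 0` coming from an arctan
antiderivative. The second term thus contributes `-π (1 - ρ) ρ^{s/2} / 2`, and after the factor
`(2/π) ρ^{(j-i)/2}` this cancels the stationary term `(1 - ρ) ρ^j`.
-/

open Real MeasureTheory Set Filter

/-- γ(y) = 1 + ρ − 2√ρ·cos(y). -/
noncomputable def gam (ρ y : ℝ) : ℝ := 1 + ρ - 2 * Real.sqrt ρ * Real.cos y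

/-- a_k(y) = sin(k·y) − √ρ·sin((k+1)·y). -/
noncomputable def aco (ρ : ℝ) (k : ℕ) (y : ℝ) : ℝ :=
  Real.sin ((k : ℝ) * y) - Real.sqrt ρ * Real.sin (((k : ℝ) + 1) * y)

/-- Transient expected queue length of an M/M/1 queue started with `i` customers. -/
noncomputable def EL (lam mu : ℝ) (i : ℕ) (t : ℝ) : ℝ :=
  (2 / Real.pi) * (lam / mu) ^ ((1 - (i : ℝ)) / 2) *
    (∫ y in (0 : ℝ)..Real.pi,
      Real.exp (-(mu * t * gam (lam / mu) y)) / (gam (lam / mu) y) ^ 2 *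
        (aco (lam / mu) i y * Real.sin y)) +
  (lam / mu) / (1 - lam / mu)

/-- Transient probability that an M/M/1 queue started with `i` customers has `j` at time `t`. -/
noncomputable def pq (lam mu : ℝ) (i j : ℕ) (t : ℝ) : ℝ :=
  (2 / Real.pi) * (lam / mu) ^ (((j : ℝ) - (i : ℝ)) / 2) *
    (∫ y in (0 : ℝ)..Real.pi,
      Real.exp (-(mu * t * gam (lam / mu) y)) / gam (lam / mu) y *
        (aco (lam / mu) i y * aco (lam / mu) j y)) +
  (1 - lam / mu) * (lam / mu) ^ j

/-- Erlang(n) density with rate `mu`: f_n(t) = μⁿ t^{n−1} e^{−μt}/(n−1)!. -/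
noncomputable def erl (mu : ℝ) (n : ℕ) (t : ℝ) : ℝ :=
  mu ^ n * t ^ (n - 1) * Real.exp (-(mu * t)) / (Nat.factorial (n - 1) : ℝ)

/-- Expected total time to complete queue with `a` customers first, then queue with `b`. -/
noncomputable def ETT (lam mu : ℝ) (a b : ℕ) : ℝ :=
  ((a : ℝ) + 2) / mu + (1 / mu) * ∫ t in Set.Ioi (0 : ℝ), erl mu (a + 1) t * EL lam mu b t

theorem two_mul_sin_sub_mul_sin_mul_sin_sub_mul_sin (a b y r : ℝ) :
    2 * ((sin a - r * sin (a + y)) * (sin b - r * sin (b + y))) =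
      (1 + r ^ 2 - 2 * r * cos y) * cos (a - b) -
        (cos (a + b) - 2 * r * cos (a + b + y) + r ^ 2 * cos (a + b + 2 * y)) := by
  have h : cos (a - b - y) + cos (a - b + y) = 2 * cos (a - b) * cos y := by
    rw [cos_sub, cos_add]; ring
  linear_combination (norm := ring_nf) two_mul_sin_mul_sin a b
    - r * two_mul_sin_mul_sin a (b + y) - r * two_mul_sin_mul_sin (a + y) b
    + r ^ 2 * two_mul_sin_mul_sin (a + y) (b + y) - r * h

theorem integral_cos_int_mul_of_ne_zero {m : ℤ} (hm : m ≠ 0) :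
    ∫ y in (0 : ℝ)..π, cos (m * y) = 0 := by
  rw [intervalIntegral.integral_comp_mul_left (fun y => cos y) (Int.cast_ne_zero.mpr hm)]
  simp [integral_cos, sin_int_mul_pi]

section

variable {ρ : ℝ}

theorem sqrt_mul_cos_lt_one (hρ1 : ρ < 1) (y : ℝ) : √ρ * cos y < 1 := by
  have hr : √ρ < 1 := (sqrt_lt' one_pos).mpr (by rwa [one_pow])
  nlinarith [cos_le_one y, sqrt_nonneg ρ]

theorem gam_eq_sq_add_sq (hρ0 : 0 ≤ ρ) (y : ℝ) :
    gam ρ y = (1 - √ρ * cos y) ^ 2 + (√ρ * sin y) ^ 2 := by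
  rw [gam]
  linear_combination (-(√ρ ^ 2)) * sin_sq_add_cos_sq y - sq_sqrt hρ0

theorem gam_pos (hρ0 : 0 ≤ ρ) (hρ1 : ρ < 1) (y : ℝ) : 0 < gam ρ y := by
  rw [gam_eq_sq_add_sq hρ0]
  have := sub_pos.mpr (sqrt_mul_cos_lt_one hρ1 y)
  positivity

theorem continuous_gam (ρ : ℝ) : Continuous (gam ρ) := by
  unfold gam; fun_prop

theorem intervalIntegrable_div_gam (hρ0 : 0 ≤ ρ) (hρ1 : ρ < 1) {f : ℝ → ℝ} (hf : Continuous f)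
    (a b : ℝ) : IntervalIntegrable (fun y => f y / gam ρ y) volume a b :=
  (hf.div (continuous_gam ρ) fun y => (gam_pos hρ0 hρ1 y).ne').intervalIntegrable a b

theorem intervalIntegrable_cos_mul_div_gam (hρ0 : 0 ≤ ρ) (hρ1 : ρ < 1) (c a b : ℝ) :
    IntervalIntegrable (fun y => cos (c * y) / gam ρ y) volume a b :=
  intervalIntegrable_div_gam hρ0 hρ1 (by fun_prop) a b

/-- `y + 2 arctan (√ρ sin y / (1 - √ρ cos y))` is the argument of the Blaschke factor
`(e^{iy} - √ρ) / (1 - √ρ e^{iy})`, which runs from `0` to `π` as `y` does. -/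
theorem hasDerivAt_add_two_mul_arctan (hρ0 : 0 ≤ ρ) (hρ1 : ρ < 1) (y : ℝ) :
    HasDerivAt (fun y => y + 2 * arctan (√ρ * sin y / (1 - √ρ * cos y)))
      ((1 - ρ) / gam ρ y) y := by
  have hd : 1 - √ρ * cos y ≠ 0 := (sub_pos.mpr (sqrt_mul_cos_lt_one hρ1 y)).ne'
  have hq : HasDerivAt (fun y => √ρ * sin y / (1 - √ρ * cos y))
      ((√ρ * cos y * (1 - √ρ * cos y) - √ρ * sin y * (√ρ * sin y)) /
        (1 - √ρ * cos y) ^ 2) y := by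
    refine ((hasDerivAt_sin y).const_mul _).div ?_ hd
    simpa using ((hasDerivAt_cos y).const_mul (√ρ)).const_sub 1
  refine ((hasDerivAt_id' y).add (hq.arctan.const_mul 2)).congr_deriv ?_
  have hγ0 := (gam_pos hρ0 hρ1 y).ne'
  rw [gam_eq_sq_add_sq hρ0] at hγ0 ⊢
  field_simp
  linear_combination (-(√ρ ^ 2)) * sin_sq_add_cos_sq y - sq_sqrt hρ0

noncomputable def cosMoment (ρ c : ℝ) : ℝ := ∫ y in (0 : ℝ)..π, cos (c * y) / gam ρ y

theorem cosMoment_neg (ρ c : ℝ) : cosMoment ρ (-c) = cosMoment ρ c := by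
  simp only [cosMoment, neg_mul, cos_neg]

theorem cosMoment_zero (hρ0 : 0 ≤ ρ) (hρ1 : ρ < 1) : cosMoment ρ 0 = π / (1 - ρ) := by
  have hint : ∫ y in (0 : ℝ)..π, (1 - ρ) / gam ρ y = π := by
    rw [intervalIntegral.integral_eq_sub_of_hasDerivAt
      (fun y _ => hasDerivAt_add_two_mul_arctan hρ0 hρ1 y)
      (intervalIntegrable_div_gam hρ0 hρ1 continuous_const 0 π)]
    simp
  rw [← hint, eq_div_iff (sub_pos.mpr hρ1).ne', mul_comm, cosMoment,
    ← intervalIntegral.integral_const_mul]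
  simp only [zero_mul, cos_zero, mul_one_div]

theorem sqrt_mul_cosMoment_add_one_add_cosMoment_sub_one (hρ0 : 0 ≤ ρ) (hρ1 : ρ < 1) (c : ℝ) :
    √ρ * (cosMoment ρ (c + 1) + cosMoment ρ (c - 1)) =
      (1 + ρ) * cosMoment ρ c - ∫ y in (0 : ℝ)..π, cos (c * y) := by
  have hpt : ∀ y, √ρ * (cos ((c + 1) * y) / gam ρ y + cos ((c - 1) * y) / gam ρ y) =
      (1 + ρ) * (cos (c * y) / gam ρ y) - cos (c * y) := by
    intro y
    have := (gam_pos hρ0 hρ1 y).ne'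
    rw [add_mul, sub_mul, one_mul, cos_add, cos_sub]
    field_simp
    rw [gam]; ring
  have hI := intervalIntegrable_cos_mul_div_gam hρ0 hρ1
  simp only [cosMoment]
  have hcos : IntervalIntegrable (fun y => cos (c * y)) volume 0 π :=
    (by fun_prop : Continuous _).intervalIntegrable _ _
  rw [← intervalIntegral.integral_add (hI _ _ _) (hI _ _ _),
    ← intervalIntegral.integral_const_mul, ← intervalIntegral.integral_const_mul,
    ← intervalIntegral.integral_sub ((hI _ _ _).const_mul _) hcos]
  simp only [hpt]

theorem cosMoment_natCast (hρ0 : 0 < ρ) (hρ1 : ρ < 1) (n : ℕ) :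
    cosMoment ρ n = π * √ρ ^ n / (1 - ρ) := by
  have hr : √ρ ≠ 0 := (sqrt_pos.mpr hρ0).ne'
  have hrec := sqrt_mul_cosMoment_add_one_add_cosMoment_sub_one hρ0.le hρ1
  have hsucc (n : ℕ) : cosMoment ρ (n + 1) = √ρ * cosMoment ρ n := by
    induction n with
    | zero =>
      have h := hrec 0
      simp only [zero_add, zero_sub, cosMoment_neg, cosMoment_zero hρ0.le hρ1, zero_mul, cos_zero,
        intervalIntegral.integral_const, sub_zero, smul_eq_mul, mul_one] at h
      rw [Nat.cast_zero, zero_add, cosMoment_zero hρ0.le hρ1]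
      have hρ' : 1 - ρ ≠ 0 := (sub_pos.mpr hρ1).ne'
      field_simp at h ⊢
      apply mul_left_cancel₀ hr
      linear_combination h / 2 - π * sq_sqrt hρ0.le
    | succ n ih =>
      have h := hrec (n + 1)
      have hcos : ∫ y in (0 : ℝ)..π, cos (((n : ℝ) + 1) * y) = 0 := by
        exact_mod_cast integral_cos_int_mul_of_ne_zero (m := n + 1) (by omega)
      rw [add_sub_cancel_right, hcos, sub_zero, ih] at h
      apply mul_left_cancel₀ hr
      push_cast
      linear_combination h - cosMoment ρ (n + 1) * sq_sqrt hρ0.le - ρ * ih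
  induction n with
  | zero => simpa using cosMoment_zero hρ0.le hρ1
  | succ n ih => rw [Nat.cast_succ, hsucc, ih, pow_succ]; ring

theorem two_mul_aco_mul_aco (hρ0 : 0 ≤ ρ) (i j : ℕ) (y : ℝ) :
    2 * (aco ρ i y * aco ρ j y) = gam ρ y * cos ((i - j : ℝ) * y) -
      (cos ((i + j : ℝ) * y) - 2 * √ρ * cos ((i + j + 1 : ℝ) * y) +
        ρ * cos ((i + j + 2 : ℝ) * y)) := by
  have h := two_mul_sin_sub_mul_sin_mul_sin_sub_mul_sin (i * y) (j * y) y (√ρ)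
  rw [sq_sqrt hρ0] at h
  simp only [aco, gam]
  convert h using 3 <;> ring_nf

theorem integral_cos_natCast_sub_mul (i j : ℕ) :
    ∫ y in (0 : ℝ)..π, cos ((i - j : ℝ) * y) = if i = j then π else 0 := by
  split_ifs with h
  · simp [h]
  · have hij : (i - j : ℤ) ≠ 0 := sub_ne_zero.mpr (by exact_mod_cast h)
    exact_mod_cast integral_cos_int_mul_of_ne_zero hij

theorem integral_aco_mul_aco_div_gam (hρ0 : 0 < ρ) (hρ1 : ρ < 1) (i j : ℕ) :
    ∫ y in (0 : ℝ)..π, aco ρ i y * aco ρ j y / gam ρ y =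
      π / 2 * ((if i = j then 1 else 0) - (1 - ρ) * √ρ ^ (i + j)) := by
  have hpt (y : ℝ) : aco ρ i y * aco ρ j y / gam ρ y = (cos ((i - j : ℝ) * y) -
      (cos ((i + j : ℝ) * y) / gam ρ y - 2 * √ρ * (cos ((i + j + 1 : ℝ) * y) / gam ρ y) +
        ρ * (cos ((i + j + 2 : ℝ) * y) / gam ρ y))) / 2 := by
    have := (gam_pos hρ0.le hρ1 y).ne'
    field_simp
    linear_combination (norm := ring_nf) two_mul_aco_mul_aco hρ0.le i j y
  have hI (c : ℝ) := intervalIntegrable_cos_mul_div_gam hρ0.le hρ1 c 0 π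
  have hmoments : cosMoment ρ (i + j : ℝ) - 2 * √ρ * cosMoment ρ (i + j + 1 : ℝ) +
      ρ * cosMoment ρ (i + j + 2 : ℝ) = π * (1 - ρ) * √ρ ^ (i + j) := by
    have hρ' : 1 - ρ ≠ 0 := (sub_pos.mpr hρ1).ne'
    have h0 := cosMoment_natCast hρ0 hρ1 (i + j)
    have h1 := cosMoment_natCast hρ0 hρ1 (i + j + 1)
    have h2 := cosMoment_natCast hρ0 hρ1 (i + j + 2)
    push_cast at h0 h1 h2
    rw [h0, h1, h2]
    field_simp
    linear_combination (ρ - 2) * √ρ ^ (i + j) * sq_sqrt hρ0.le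
  have hc : IntervalIntegrable (fun y => cos ((i - j : ℝ) * y)) volume 0 π :=
    (by fun_prop : Continuous _).intervalIntegrable _ _
  have h0 := hI (i + j)
  have h1 := (hI (i + j + 1)).const_mul (2 * √ρ)
  have h2 := (hI (i + j + 2)).const_mul ρ
  simp only [hpt]
  rw [intervalIntegral.integral_div, intervalIntegral.integral_sub hc ((h0.sub h1).add h2),
    intervalIntegral.integral_add (h0.sub h1) h2, intervalIntegral.integral_sub h0 h1,
    intervalIntegral.integral_const_mul, intervalIntegral.integral_const_mul,
    integral_cos_natCast_sub_mul, ← cosMoment, ← cosMoment, ← cosMoment, hmoments]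
  split_ifs <;> ring

theorem rpow_sub_div_two_mul_sqrt_pow (hρ : 0 < ρ) (i j : ℕ) :
    ρ ^ (((j : ℝ) - (i : ℝ)) / 2) * √ρ ^ (i + j) = ρ ^ j := by
  rw [sqrt_eq_rpow, ← rpow_natCast, ← rpow_mul hρ.le, ← rpow_add hρ, ← rpow_natCast]
  congr 1
  push_cast
  ring

end

/-- p_{ij}(0) = 1 if i = j and 0 otherwise. -/
theorem pq_at_zero (lam mu : ℝ) (hlam : 0 < lam) (hmu : 0 < mu)
    (hρ : lam / mu < 1) (i j : ℕ) :
    pq lam mu i j 0 = if i = j then 1 else 0 := by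
  set ρ := lam / mu
  have hρ0 : 0 < ρ := div_pos hlam hmu
  have hintegrand : (fun y => exp (-(mu * 0 * gam ρ y)) / gam ρ y * (aco ρ i y * aco ρ j y)) =
      fun y => aco ρ i y * aco ρ j y / gam ρ y := by
    ext y
    rw [mul_zero, zero_mul, neg_zero, exp_zero, one_div_mul_eq_div]
  calc pq lam mu i j 0
      = 2 / π * ρ ^ (((j : ℝ) - (i : ℝ)) / 2) *
          (π / 2 * ((if i = j then 1 else 0) - (1 - ρ) * √ρ ^ (i + j))) + (1 - ρ) * ρ ^ j := by
        rw [pq, hintegrand, integral_aco_mul_aco_div_gam hρ0 hρ]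
    _ = ρ ^ (((j : ℝ) - (i : ℝ)) / 2) * (if i = j then 1 else 0) := by
        rw [← rpow_sub_div_two_mul_sqrt_pow hρ0 i j]
        field_simp
        ring
    _ = if i = j then 1 else 0 := by
        split_ifs with h
        · simp [h]
        · rw [mul_zero]
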